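/- arXiv:2206.03444 — 4 statements merged into one kernel-verified Lean document; each statement's English description precedes it below -/
import Mathlib

section
/- Let φ ∈ (0,1) and let A, B, F be natural numbers with A < B ≤ L, F ≥ 1 and η(A,B) > 0. Suppose η(J, J+1) ≤ (φ/F)·η(A,B) for all J ∈ {A, …, B−1}. Then there exists a partition A = I_0 < I_1 < … < I_F = B such that η(I_{f−1}, I_f) ≥ ((1−φ)/F)·η(A,B) for every f ∈ {1, …, F}. -/
open BigOperators

noncomputable section

/-- Relative gap `η(I,J) = 1 - κ_J²/κ_I²` (1-based indices). -/
def eta (κ : ℕ → ℝ) (i j : ℕ) : ℝ := 1 - κ j ^ 2 / κ i ^ 2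

private lemma eta_subadd (κ : ℕ → ℝ) (i j k : ℕ) (hi : 0 < κ i) (hj : 0 < κ j)
    (hk : 0 ≤ κ k) (hji : κ j ≤ κ i) (hkj : κ k ≤ κ j) :
    eta κ i k ≤ eta κ i j + eta κ j k := by
  unfold eta
  have h1 : κ j ^ 2 / κ i ^ 2 ≤ 1 := by
    rw [div_le_one (by positivity)]; nlinarith
  have h2 : κ k ^ 2 / κ j ^ 2 ≤ 1 := by
    rw [div_le_one (by positivity)]; nlinarith
  have key : κ k ^ 2 / κ i ^ 2 = (κ j ^ 2 / κ i ^ 2) * (κ k ^ 2 / κ j ^ 2) := by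
    field_simp
  rw [key]
  nlinarith [mul_nonneg (sub_nonneg.2 h1) (sub_nonneg.2 h2)]

/-- Greedy subdivision sequence. -/
def seqI (κ : ℕ → ℝ) (ε : ℝ) (A F B : ℕ) : ℕ → ℕ
  | 0 => A
  | f + 1 => if f + 1 < F then
      sInf {J | seqI κ ε A F B f < J ∧ ε ≤ eta κ (seqI κ ε A F B f) J}
    else B

/-- subdivision lemma: if all next-neighbor gaps between `A` and `B`
are at most `(φ/F)·η(A,B)`, then `(A,B)` can be partitioned into `F` pieces, each with
relative gap at least `((1-φ)/F)·η(A,B)`. -/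
theorem statement6 (L : ℕ) (κ : ℕ → ℝ)
    (hκpos : ∀ i, 1 ≤ i → i ≤ L → 0 < κ i)
    (hκmono : ∀ i j, 1 ≤ i → i ≤ j → j ≤ L → κ j ≤ κ i)
    (φ : ℝ) (hφ0 : 0 < φ) (hφ1 : φ < 1)
    (A B F : ℕ) (hA : 1 ≤ A) (hAB : A < B) (hBL : B ≤ L) (hF : 1 ≤ F)
    (hηAB : 0 < eta κ A B)
    (hsmall : ∀ J, A ≤ J → J ≤ B - 1 → eta κ J (J + 1) ≤ (φ / F) * eta κ A B) :
    ∃ I : ℕ → ℕ, I 0 = A ∧ I F = B ∧ (∀ f, f < F → I f < I (f + 1)) ∧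
      ∀ f, 1 ≤ f → f ≤ F → ((1 - φ) / F) * eta κ A B ≤ eta κ (I (f - 1)) (I f) := by
  have hFR : (0:ℝ) < F := by exact_mod_cast hF
  set η : ℝ := eta κ A B with hηdef
  set ε : ℝ := ((1 - φ) / F) * η with hεdef
  set I : ℕ → ℕ := seqI κ ε A F B with hIdef
  -- positivity and monotonicity on [A,B]
  have hpos : ∀ x, A ≤ x → x ≤ B → 0 < κ x := fun x h1 h2 =>
    hκpos x (hA.trans h1) (h2.trans hBL)
  have hmono : ∀ x y, A ≤ x → x ≤ y → y ≤ B → κ y ≤ κ x := fun x y h1 h2 h3 =>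
    hκmono x y (hA.trans h1) h2 (h3.trans hBL)
  -- if x is a valid partial point at step f, then B belongs to the greedy set over x
  have hBmem : ∀ (x f : ℕ), f < F → A ≤ x → x < B → eta κ A x ≤ (f : ℝ)/F * η →
      ε ≤ eta κ x B := by
    intro x f hfF hAx hxB hcum
    have hsub : η ≤ eta κ A x + eta κ x B :=
      eta_subadd κ A x B (hpos A le_rfl hAB.le) (hpos x hAx hxB.le)
        (hpos B hAB.le le_rfl).le (hmono A x le_rfl hAx hxB.le)
        (hmono x B hAx hxB.le le_rfl)
    have hfF' : (f : ℝ) + 1 ≤ F := by exact_mod_cast hfF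
    have h1 : (1 - φ)/(F:ℝ) ≤ ((F:ℝ) - (f:ℝ))/F := by
      rw [div_le_div_iff₀ hFR hFR]
      nlinarith [mul_nonneg (by linarith : (0:ℝ) ≤ (F:ℝ) - f - 1 + φ) hFR.le]
    have h2 : (((F:ℝ) - f)/F) * η = η - (f:ℝ)/F * η := by field_simp
    have h3 : (1 - φ)/(F:ℝ) * η ≤ (((F:ℝ) - f)/F) * η :=
      mul_le_mul_of_nonneg_right h1 hηAB.le
    rw [hεdef]; linarith
  -- main invariant
  have main : ∀ f, f < F → A ≤ I f ∧ I f < B ∧ eta κ A (I f) ≤ (f : ℝ)/F * η := by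
    intro f
    induction f with
    | zero =>
      intro _
      have hI0 : I 0 = A := rfl
      refine ⟨le_rfl, by simpa [hI0] using hAB, ?_⟩
      have hκA := (hpos A le_rfl hAB.le).ne'
      have hAA : eta κ A A = 0 := by
        unfold eta; rw [div_self (pow_ne_zero 2 hκA)]; ring
      simp [hI0, hAA]
    | succ f ih =>
      intro hf1F
      have hfF : f < F := Nat.lt_of_succ_lt hf1F
      obtain ⟨hAIf, hIfB, hcum⟩ := ih hfF
      set S : Set ℕ := {J | I f < J ∧ ε ≤ eta κ (I f) J} with hSdef
      have hBS : B ∈ S := ⟨hIfB, hBmem (I f) f hfF hAIf hIfB hcum⟩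
      have hSne : S.Nonempty := ⟨B, hBS⟩
      have hIsucc : I (f + 1) = sInf S := by
        show seqI κ ε A F B (f+1) = sInf S
        rw [seqI, if_pos hf1F]
      set m : ℕ := sInf S with hmdef
      have hmS : m ∈ S := Nat.sInf_mem hSne
      have hmB : m ≤ B := Nat.sInf_le hBS
      have hIfm : I f < m := hmS.1
      -- piece bound : eta κ (I f) m ≤ η / F
      have hpiece : eta κ (I f) m ≤ η / F := by
        have hδ : eta κ (m - 1) m ≤ (φ / F) * η ∧ A ≤ m - 1 := by
          constructor
          · have := hsmall (m - 1) (by omega) (by omega)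
            rwa [Nat.sub_add_cancel (by omega : 1 ≤ m)] at this
          · omega
        rcases eq_or_lt_of_le (Nat.succ_le_of_lt hIfm) with heq | hlt
        · -- m = I f + 1
          have heq' : I f + 1 = m := heq
          have h1 : eta κ (I f) m ≤ (φ / F) * η := by
            have := hsmall (I f) hAIf (by omega)
            rwa [heq'] at this
          have : (φ / F) * η ≤ η / F := by
            rw [div_mul_eq_mul_div, div_le_div_iff₀ hFR hFR]
            nlinarith [mul_nonneg (sub_pos.2 hφ1).le (mul_pos hηAB hFR).le]
          linarith
        · -- I f + 1 < m, so m - 1 ∉ S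
          have hnotS : m - 1 ∉ S := Nat.notMem_of_lt_sInf (by omega)
          have hIfm1 : I f < m - 1 := by omega
          have hlt' : eta κ (I f) (m - 1) < ε := by
            by_contra h
            exact hnotS ⟨hIfm1, le_of_not_gt h⟩
          have hsub : eta κ (I f) m ≤ eta κ (I f) (m - 1) + eta κ (m - 1) m :=
            eta_subadd κ (I f) (m - 1) m (hpos _ hAIf hIfB.le)
              (hpos _ (by omega) (by omega)) (hpos _ (by omega) hmB).le
              (hmono _ _ hAIf (by omega) (by omega))
              (hmono _ _ (by omega) (by omega) hmB)
          have : ε + (φ / F) * η = η / F := by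
            rw [hεdef]; field_simp; ring
          linarith [hδ.1]
      -- cumulative bound
      have hcum' : eta κ A m ≤ ((f : ℝ) + 1)/F * η := by
        have hsub : eta κ A m ≤ eta κ A (I f) + eta κ (I f) m :=
          eta_subadd κ A (I f) m (hpos A le_rfl hAB.le) (hpos _ hAIf hIfB.le)
            (hpos _ (by omega) hmB).le (hmono A _ le_rfl hAIf hIfB.le)
            (hmono _ _ hAIf hIfm.le hmB)
        have : (f : ℝ)/F * η + η / F = ((f : ℝ) + 1)/F * η := by
          field_simp
        linarith
      -- m < B
      have hmltB : m < B := by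
        rcases lt_or_eq_of_le hmB with h | h
        · exact h
        · exfalso
          have hf1 : (f : ℝ) + 1 < F := by exact_mod_cast hf1F
          have : ((f : ℝ) + 1)/F * η < η := by
            rw [div_mul_eq_mul_div, div_lt_iff₀ hFR]
            nlinarith
          rw [h] at hcum'
          rw [← hηdef] at hcum'
          linarith
      refine ⟨?_, by rwa [hIsucc], by rw [hIsucc]; push_cast; exact hcum'⟩
      rw [hIsucc]; omega
  -- step facts
  have stepfact : ∀ f, f < F → I f < I (f + 1) ∧ ε ≤ eta κ (I f) (I (f + 1)) := by
    intro f hfF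
    obtain ⟨hAIf, hIfB, hcum⟩ := main f hfF
    by_cases hf1 : f + 1 < F
    · set S : Set ℕ := {J | I f < J ∧ ε ≤ eta κ (I f) J} with hSdef
      have hBS : B ∈ S := ⟨hIfB, hBmem (I f) f hfF hAIf hIfB hcum⟩
      have hIsucc : I (f + 1) = sInf S := by
        show seqI κ ε A F B (f+1) = sInf S
        rw [seqI, if_pos hf1]
      have hmS : sInf S ∈ S := Nat.sInf_mem ⟨B, hBS⟩
      rw [hIsucc]
      exact ⟨hmS.1, hmS.2⟩
    · have hIsucc : I (f + 1) = B := by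
        show seqI κ ε A F B (f+1) = B
        rw [seqI, if_neg hf1]
      rw [hIsucc]
      exact ⟨hIfB, hBmem (I f) f hfF hAIf hIfB hcum⟩
  have hIF : I F = B := by
    have h : F - 1 + 1 = F := by omega
    show seqI κ ε A F B F = B
    rw [← h, seqI, if_neg (by omega)]
  refine ⟨I, rfl, hIF, fun f hf => (stepfact f hf).1, ?_⟩
  intro f hf1 hfF
  obtain ⟨g, rfl⟩ : ∃ g, f = g + 1 := ⟨f - 1, by omega⟩
  have := (stepfact g (by omega)).2
  simpa using this
end
end

section
/- Let T ∈ GL(L,ℂ) be invertible, W ∈ 𝔾_{L,w}, and v ∈ ℂ^L a unit vector with Wv = 0. Then (T·W)^⊥Tv ≠ 0, and T·(W + vv*) = T·W + [((T·W)^⊥T)∘v]·[((T·W)^⊥T)∘v]*. -/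
open Matrix BigOperators

noncomputable section

/-- The squared Euclidean norm of a complex vector. -/
def sqNorm {n : ℕ} (v : Fin n → ℂ) : ℝ := ∑ i, ‖v i‖ ^ 2

/-- The Euclidean norm of a complex vector. -/
def vNorm {n : ℕ} (v : Fin n → ℂ) : ℝ := Real.sqrt (sqNorm v)

/-- Membership in the Grassmannian `𝔾_{L,q}`: an orthogonal projection of rank `q`. -/
def IsProjOfRank {L : ℕ} (q : ℕ) (Q : Matrix (Fin L) (Fin L) ℂ) : Prop :=
  Q * Q = Q ∧ Qᴴ = Q ∧ Q.trace = (q : ℂ)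

/-- The action `T · Q` of an invertible matrix `T` on the Grassmannian: for `Q = ΦΦ*` this
equals `TΦ(Φ*T*TΦ)⁻¹Φ*T*`, i.e. the orthogonal projection onto `T (ran Q)`. -/
def grAct {L : ℕ} (T Q : Matrix (Fin L) (Fin L) ℂ) : Matrix (Fin L) (Fin L) ℂ :=
  T * Q * (Q * Tᴴ * T * Q + (1 - Q))⁻¹ * (Q * Tᴴ)

/-- The normalized image `S ∘ v := Sv / ‖Sv‖`. -/
def circAct {n : ℕ} (S : Matrix (Fin n) (Fin n) ℂ) (v : Fin n → ℂ) : Fin n → ℂ :=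
  ((vNorm (S.mulVec v) : ℂ))⁻¹ • S.mulVec v

lemma sqNorm_nonneg {n : ℕ} (v : Fin n → ℂ) : 0 ≤ sqNorm v :=
  Finset.sum_nonneg fun _ _ => by positivity

lemma sqNorm_eq_zero_iff {n : ℕ} {v : Fin n → ℂ} : sqNorm v = 0 ↔ v = 0 := by
  constructor
  · intro h
    funext i
    have := (Finset.sum_eq_zero_iff_of_nonneg (fun i _ => by positivity)).1 h i (Finset.mem_univ i)
    simpa [pow_eq_zero_iff] using this
  · intro h; simp [h, sqNorm]

lemma dot_star_self {n : ℕ} (v : Fin n → ℂ) : dotProduct (star v) v = ((sqNorm v : ℝ) : ℂ) := by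
  simp only [dotProduct, Pi.star_apply, sqNorm]
  push_cast
  refine Finset.sum_congr rfl fun i _ => ?_
  simpa using RCLike.conj_mul (v i)

lemma mul_vecMulVec {L : ℕ} (A : Matrix (Fin L) (Fin L) ℂ) (a b : Fin L → ℂ) :
    A * vecMulVec a b = vecMulVec (A.mulVec a) b := by
  ext i j
  simp [mul_apply, vecMulVec_apply, mulVec, dotProduct, Finset.sum_mul, mul_assoc]

lemma vecMulVec_mul {L : ℕ} (a b : Fin L → ℂ) (A : Matrix (Fin L) (Fin L) ℂ) :
    vecMulVec a b * A = vecMulVec a (vecMul b A) := by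
  ext i j
  simp [mul_apply, vecMulVec_apply, vecMul, dotProduct, Finset.mul_sum, mul_assoc]

lemma vecMulVec_mul_vecMulVec {L : ℕ} (a b c d : Fin L → ℂ) :
    vecMulVec a b * vecMulVec c d = (dotProduct b c) • vecMulVec a d := by
  ext i j
  simp [mul_apply, vecMulVec_apply, dotProduct, Finset.mul_sum, Finset.sum_mul]
  ring_nf
  exact Finset.sum_congr rfl fun k _ => by ring

lemma vecMulVec_conjT {L : ℕ} (a b : Fin L → ℂ) :
    (vecMulVec a b)ᴴ = vecMulVec (star b) (star a) := by
  ext i j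
  simp [vecMulVec_apply, conjTranspose_apply, mul_comm]

lemma vecMulVec_smul_left {L : ℕ} (c : ℂ) (a b : Fin L → ℂ) :
    vecMulVec (c • a) b = c • vecMulVec a b := by
  ext i j; simp [vecMulVec_apply, mul_assoc]

lemma vecMulVec_mulVec {L : ℕ} (a b x : Fin L → ℂ) :
    (vecMulVec a b).mulVec x = (dotProduct b x) • a := by
  ext i
  simp [mulVec, vecMulVec_apply, dotProduct, Finset.mul_sum, mul_comm, mul_assoc, mul_left_comm]

section Proj
variable {L : ℕ} (T Q : Matrix (Fin L) (Fin L) ℂ)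

def NN : Matrix (Fin L) (Fin L) ℂ := Q * Tᴴ * T * Q + (1 - Q)

variable {T Q}

lemma grAct_eq : T * Q * (Q * Tᴴ * T * Q + (1 - Q))⁻¹ * (Q * Tᴴ) = T * Q * (NN T Q)⁻¹ * (Q * Tᴴ) := rfl

lemma NN_herm (hQH : Qᴴ = Q) : (NN T Q)ᴴ = NN T Q := by
  simp [NN, conjTranspose_add, conjTranspose_sub, conjTranspose_mul, hQH, Matrix.mul_assoc]

lemma one_sub_sq (hQ : Q * Q = Q) : (1 - Q) * (1 - Q) = 1 - Q := by
  rw [sub_mul, mul_sub, mul_sub, one_mul, mul_one, hQ, Matrix.one_mul]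
  abel

lemma NN_eq (hQ : Q * Q = Q) (hQH : Qᴴ = Q) :
    NN T Q = (T * Q)ᴴ * (T * Q) + (1 - Q)ᴴ * (1 - Q) := by
  rw [conjTranspose_mul, hQH, conjTranspose_sub, conjTranspose_one, hQH, one_sub_sq hQ, NN,
    Matrix.mul_assoc, Matrix.mul_assoc]

lemma NN_unit (hT : IsUnit T) (hQ : Q * Q = Q) (hQH : Qᴴ = Q) : IsUnit (NN T Q) := by
  rw [← Matrix.mulVec_injective_iff_isUnit]
  have hTinj : Function.Injective T.mulVec := mulVec_injective_iff_isUnit.2 hT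
  have key : ∀ x, (NN T Q).mulVec x = 0 → x = 0 := by
    intro x hx
    have h0 : dotProduct (star x) ((NN T Q).mulVec x) = 0 := by rw [hx, dotProduct_zero]
    have hsq : ∀ A : Matrix (Fin L) (Fin L) ℂ,
        dotProduct (star x) ((Aᴴ * A).mulVec x) = ((sqNorm (A.mulVec x) : ℝ) : ℂ) := by
      intro A
      rw [← Matrix.mulVec_mulVec, dotProduct_mulVec, ← Matrix.star_mulVec, dot_star_self]
    rw [NN_eq hQ hQH, add_mulVec, dotProduct_add, hsq, hsq] at h0
    have h0' : sqNorm ((T * Q).mulVec x) + sqNorm ((1 - Q).mulVec x) = 0 := by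
      exact_mod_cast h0
    have h1 : sqNorm ((T * Q).mulVec x) = 0 := by
      have := sqNorm_nonneg ((T * Q).mulVec x); have := sqNorm_nonneg ((1 - Q).mulVec x); linarith
    have h2 : sqNorm ((1 - Q).mulVec x) = 0 := by
      have := sqNorm_nonneg ((T * Q).mulVec x); have := sqNorm_nonneg ((1 - Q).mulVec x); linarith
    have hQx : Q.mulVec x = 0 := by
      apply hTinj
      rw [Matrix.mulVec_mulVec, mulVec_zero]
      exact sqNorm_eq_zero_iff.1 h1
    have h2' : x - Q.mulVec x = 0 := by
      have := sqNorm_eq_zero_iff.1 h2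
      rwa [sub_mulVec, one_mulVec] at this
    rw [hQx, sub_zero] at h2'
    exact h2'
  intro a b hab
  have : (NN T Q).mulVec (a - b) = 0 := by rw [mulVec_sub, hab, sub_self]
  exact sub_eq_zero.1 (key _ this)

end Proj


section GrAct
variable {L : ℕ} {T Q : Matrix (Fin L) (Fin L) ℂ}

lemma grAct_def : grAct T Q = T * Q * (NN T Q)⁻¹ * (Q * Tᴴ) := rfl

lemma NN_mul_Q (hQ : Q * Q = Q) : NN T Q * Q = Q * Tᴴ * T * Q := by
  rw [NN, add_mul, sub_mul, Matrix.one_mul, Matrix.mul_assoc (Q * Tᴴ * T) Q Q, hQ]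
  simp

lemma Q_mul_NN (hQ : Q * Q = Q) : Q * NN T Q = Q * Tᴴ * T * Q := by
  simp only [NN, Matrix.mul_add, Matrix.mul_sub, Matrix.mul_one, ← Matrix.mul_assoc, hQ]
  simp

lemma grAct_herm (hT : IsUnit T) (hQ : Q * Q = Q) (hQH : Qᴴ = Q) :
    (grAct T Q)ᴴ = grAct T Q := by
  simp only [grAct_def, conjTranspose_mul, conjTranspose_conjTranspose,
    Matrix.conjTranspose_nonsing_inv, NN_herm hQH, hQH, Matrix.mul_assoc]

lemma grAct_fix (hT : IsUnit T) (hQ : Q * Q = Q) (hQH : Qᴴ = Q) :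
    grAct T Q * (T * Q) = T * Q := by
  have hdet : IsUnit (NN T Q).det := (Matrix.isUnit_iff_isUnit_det _).1 (NN_unit hT hQ hQH)
  have h1 : (NN T Q)⁻¹ * NN T Q = 1 := Matrix.nonsing_inv_mul _ hdet
  calc grAct T Q * (T * Q) = T * (Q * ((NN T Q)⁻¹ * (Q * Tᴴ * T * Q))) := by
        simp only [grAct_def, Matrix.mul_assoc]
    _ = T * (Q * ((NN T Q)⁻¹ * (NN T Q * Q))) := by rw [← NN_mul_Q hQ]
    _ = T * (Q * Q) := by rw [← Matrix.mul_assoc ((NN T Q)⁻¹), h1, Matrix.one_mul]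
    _ = T * Q := by rw [hQ]

lemma grAct_idem (hT : IsUnit T) (hQ : Q * Q = Q) (hQH : Qᴴ = Q) :
    grAct T Q * grAct T Q = grAct T Q := by
  calc grAct T Q * grAct T Q
      = grAct T Q * (T * Q) * ((NN T Q)⁻¹ * (Q * Tᴴ)) := by
        simp only [grAct_def, Matrix.mul_assoc]
    _ = T * Q * ((NN T Q)⁻¹ * (Q * Tᴴ)) := by rw [grAct_fix hT hQ hQH]
    _ = grAct T Q := by simp only [grAct_def, Matrix.mul_assoc]

lemma perp_fix (hT : IsUnit T) (hQ : Q * Q = Q) (hQH : Qᴴ = Q) :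
    (1 - grAct T Q) * (T * Q) = 0 := by
  rw [sub_mul, Matrix.one_mul, grAct_fix hT hQ hQH, sub_self]

end GrAct

lemma vecMulVec_zero_left {L : ℕ} (b : Fin L → ℂ) : vecMulVec (0 : Fin L → ℂ) b = 0 := by
  ext i j; simp [vecMulVec_apply]

lemma vecMulVec_zero_right {L : ℕ} (a : Fin L → ℂ) : vecMulVec a (0 : Fin L → ℂ) = 0 := by
  ext i j; simp [vecMulVec_apply]

lemma vecMulVec_smul_right {L : ℕ} (c : ℂ) (a b : Fin L → ℂ) :
    vecMulVec a (c • b) = c • vecMulVec a b := by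
  ext i j; simp [vecMulVec_apply]; ring

lemma vecMulVec_add_left {L : ℕ} (a b c : Fin L → ℂ) :
    vecMulVec (a + b) c = vecMulVec a c + vecMulVec b c := by
  ext i j; simp [vecMulVec_apply]; ring


/-- well-definedness of the auxiliary action: for invertible `T`,
`W ∈ 𝔾_{L,w}` and a unit vector `v` with `Wv = 0` one has `(T·W)^⊥ T v ≠ 0` and
`T·(W + vv*) = T·W + [((T·W)^⊥T)∘v][((T·W)^⊥T)∘v]*`. -/
theorem statement7 (L w : ℕ) (T : Matrix (Fin L) (Fin L) ℂ) (hT : IsUnit T)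
    (W : Matrix (Fin L) (Fin L) ℂ) (hW : IsProjOfRank w W)
    (v : Fin L → ℂ) (hv : sqNorm v = 1) (hWv : W.mulVec v = 0) :
    ((1 - grAct T W) * T).mulVec v ≠ 0 ∧
    grAct T (W + Matrix.vecMulVec v (star v)) =
      grAct T W +
        Matrix.vecMulVec (circAct ((1 - grAct T W) * T) v)
          (star (circAct ((1 - grAct T W) * T) v)) := by
  obtain ⟨hWq, hWH, -⟩ := hW
  have hTinj : Function.Injective T.mulVec := mulVec_injective_iff_isUnit.2 hT
  set P : Matrix (Fin L) (Fin L) ℂ := grAct T W with hPdef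
  set x : Fin L → ℂ := T.mulVec v with hxdef
  have hu0eq : ((1 - P) * T).mulVec v = (1 - P).mulVec x := (Matrix.mulVec_mulVec v (1 - P) T).symm
  set u0 : Fin L → ℂ := (1 - P).mulVec x with hu0def
  -- Part 1
  have hvne : v ≠ 0 := by
    intro h; rw [h] at hv; simp [sqNorm] at hv
  have part1 : ((1 - P) * T).mulVec v ≠ 0 := by
    rw [hu0eq]
    intro h0
    have hxP : x = P.mulVec x := by
      have := h0
      rw [hu0def] at this
      rw [sub_mulVec, one_mulVec, sub_eq_zero] at this
      exact this
    have hxW : x = T.mulVec (W.mulVec (((NN T W)⁻¹ * (W * Tᴴ)).mulVec x)) := by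
      calc x = P.mulVec x := hxP
        _ = (T * (W * ((NN T W)⁻¹ * (W * Tᴴ)))).mulVec x := by
            rw [hPdef, grAct_def]; simp only [Matrix.mul_assoc]
        _ = T.mulVec (W.mulVec (((NN T W)⁻¹ * (W * Tᴴ)).mulVec x)) := by
            simp only [← Matrix.mulVec_mulVec]
    set y : Fin L → ℂ := ((NN T W)⁻¹ * (W * Tᴴ)).mulVec x with hy
    have hvW : v = W.mulVec y := hTinj (by rw [← hxdef, hxW])
    have : W.mulVec v = v := by
      conv_lhs => rw [hvW]
      rw [Matrix.mulVec_mulVec, hWq, ← hvW]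
    rw [hWv] at this
    exact hvne this.symm
  refine ⟨part1, ?_⟩
  -- setup for part 2
  have hu0ne : u0 ≠ 0 := by rw [← hu0eq]; exact part1
  have hsqpos : 0 < sqNorm u0 := by
    rcases lt_or_eq_of_le (sqNorm_nonneg u0) with h | h
    · exact h
    · exact absurd (sqNorm_eq_zero_iff.1 h.symm) hu0ne
  set nn : ℝ := vNorm u0 with hnn
  have hnnpos : 0 < nn := Real.sqrt_pos.2 hsqpos
  have hnnC : (nn : ℂ) ≠ 0 := by exact_mod_cast hnnpos.ne'
  have hnnsq : ((sqNorm u0 : ℝ) : ℂ) = (nn : ℂ) * (nn : ℂ) := by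
    rw [← Complex.ofReal_mul]
    norm_cast
    rw [hnn, vNorm, Real.mul_self_sqrt (sqNorm_nonneg u0)]
  -- part 2
  set Q : Matrix (Fin L) (Fin L) ℂ := W + vecMulVec v (star v) with hQdef
  set S : Matrix (Fin L) (Fin L) ℂ := grAct T Q with hSdef
  set cc : ℂ := ((nn : ℂ))⁻¹ * ((nn : ℂ))⁻¹ with hccdef
  set U0 : Matrix (Fin L) (Fin L) ℂ := vecMulVec u0 (star u0) with hU0def
  have hu : circAct ((1 - P) * T) v = ((nn : ℂ))⁻¹ • u0 := by
    rw [circAct, hu0eq]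
  have hstaru : star (((nn : ℂ))⁻¹ • u0) = ((nn : ℂ))⁻¹ • star u0 := by
    rw [star_smul]
    simp [Complex.star_def, map_inv₀, Complex.conj_ofReal]
  have hU : vecMulVec (circAct ((1 - P) * T) v) (star (circAct ((1 - P) * T) v)) = cc • U0 := by
    rw [hu, hstaru, vecMulVec_smul_left, vecMulVec_smul_right, smul_smul, hccdef, hU0def]
  set R : Matrix (Fin L) (Fin L) ℂ := P + cc • U0 with hRdef
  -- basic projection facts
  have hPherm : Pᴴ = P := grAct_herm hT hWq hWH
  have hPidem : P * P = P := grAct_idem hT hWq hWH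
  have hPfixW : P * (T * W) = T * W := grAct_fix hT hWq hWH
  have hperpW : (1 - P) * (T * W) = 0 := perp_fix hT hWq hWH
  -- Q is a projection
  have hWvv : W * vecMulVec v (star v) = 0 := by
    rw [mul_vecMulVec, hWv, vecMulVec_zero_left]
  have hsvW : vecMul (star v) W = 0 := by
    have h : vecMul (star v) Wᴴ = 0 := by rw [← Matrix.star_mulVec, hWv, star_zero]
    rwa [hWH] at h
  have hvvW : vecMulVec v (star v) * W = 0 := by
    rw [vecMulVec_mul, hsvW, vecMulVec_zero_right]
  have hvvvv : vecMulVec v (star v) * vecMulVec v (star v) = vecMulVec v (star v) := by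
    rw [vecMulVec_mul_vecMulVec, dot_star_self, hv]
    simp
  have hQq : Q * Q = Q := by
    rw [hQdef, add_mul, mul_add, mul_add, hWq, hWvv, hvvW, hvvvv]
    abel
  have hQH2 : Qᴴ = Q := by
    rw [hQdef, conjTranspose_add, hWH, vecMulVec_conjT, star_star]
  have hQv : Q.mulVec v = v := by
    rw [hQdef, add_mulVec, hWv, vecMulVec_mulVec, dot_star_self, hv]
    simp
  have hTQ : T * Q = T * W + vecMulVec x (star v) := by
    rw [hQdef, mul_add, mul_vecMulVec, ← hxdef]
  have hQsub : Q * (1 - vecMulVec v (star v)) = W := by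
    rw [mul_sub, mul_one, mul_vecMulVec, hQv, hQdef, add_sub_cancel_right]
  -- facts about S
  have hSfixQ : S * (T * Q) = T * Q := grAct_fix hT hQq hQH2
  have hSH : Sᴴ = S := grAct_herm hT hQq hQH2
  have hSTW : S * (T * W) = T * W := by
    have hTW' : T * W = T * Q * (1 - vecMulVec v (star v)) := by
      rw [Matrix.mul_assoc, hQsub]
    rw [hTW', ← Matrix.mul_assoc, hSfixQ]
  have hSP : S * P = P := by
    calc S * P = S * (T * W) * ((NN T W)⁻¹ * (W * Tᴴ)) := by
          rw [hPdef, grAct_def]; simp only [Matrix.mul_assoc]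
      _ = T * W * ((NN T W)⁻¹ * (W * Tᴴ)) := by rw [hSTW]
      _ = P := by rw [hPdef, grAct_def]; simp only [Matrix.mul_assoc]
  -- facts about u0
  have hu0x : u0 = x - P.mulVec x := by rw [hu0def, sub_mulVec, one_mulVec]
  have hsu0 : star u0 = vecMul (star x) (1 - P) := by
    rw [hu0def, Matrix.star_mulVec, conjTranspose_sub, conjTranspose_one, hPherm]
  have hdotu0x : dotProduct (star u0) x = ((sqNorm u0 : ℝ) : ℂ) := by
    calc dotProduct (star u0) x = dotProduct (vecMul (star x) (1 - P)) x := by rw [hsu0]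
      _ = dotProduct (star x) ((1 - P).mulVec x) := (dotProduct_mulVec _ _ _).symm
      _ = dotProduct (star x) (((1 - P) * (1 - P)).mulVec x) := by rw [one_sub_sq hPidem]
      _ = dotProduct (vecMul (star x) (1 - P)) ((1 - P).mulVec x) := by
          rw [← Matrix.mulVec_mulVec, dotProduct_mulVec]
      _ = dotProduct (star u0) u0 := by rw [← hsu0, ← hu0def]
      _ = ((sqNorm u0 : ℝ) : ℂ) := dot_star_self u0
  have hsu0TW : vecMul (star u0) (T * W) = 0 := by
    rw [hsu0, Matrix.vecMul_vecMul, hperpW, Matrix.vecMul_zero]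
  have hPx_u0 : P.mulVec x + u0 = x := by rw [hu0x]; abel
  have hcc1 : cc * ((sqNorm u0 : ℝ) : ℂ) = 1 := by
    rw [hnnsq, hccdef]
    field_simp
  -- R fixes T*Q
  have hU0TW : U0 * (T * W) = 0 := by
    rw [hU0def, vecMulVec_mul, hsu0TW, vecMulVec_zero_right]
  have hU0B : U0 * vecMulVec x (star v) = ((sqNorm u0 : ℝ) : ℂ) • vecMulVec u0 (star v) := by
    rw [hU0def, vecMulVec_mul_vecMulVec, hdotu0x]
  have hRTQ : R * (T * Q) = T * Q := by
    calc R * (T * Q)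
        = P * (T * W) + P * vecMulVec x (star v)
            + (cc • (U0 * (T * W)) + cc • (U0 * vecMulVec x (star v))) := by
          rw [hRdef, hTQ]
          simp only [add_mul, Matrix.mul_add, Matrix.smul_mul]
      _ = T * W + vecMulVec (P.mulVec x) (star v) + vecMulVec u0 (star v) := by
          rw [hPfixW, hU0TW, smul_zero, zero_add, hU0B, smul_smul, hcc1, one_smul,
            mul_vecMulVec]
      _ = T * W + vecMulVec x (star v) := by
          rw [add_assoc, ← vecMulVec_add_left, hPx_u0]
      _ = T * Q := hTQ.symm
  -- S fixes R
  have hSx : S.mulVec x = x := by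
    have hxQ : x = (T * Q).mulVec v := by
      rw [← Matrix.mulVec_mulVec, hQv, ← hxdef]
    calc S.mulVec x = S.mulVec ((T * Q).mulVec v) := by rw [← hxQ]
      _ = (S * (T * Q)).mulVec v := Matrix.mulVec_mulVec v S (T * Q)
      _ = (T * Q).mulVec v := by rw [hSfixQ]
      _ = x := hxQ.symm
  have hSPx : S.mulVec (P.mulVec x) = P.mulVec x := by
    rw [Matrix.mulVec_mulVec, hSP]
  have hSu0 : S.mulVec u0 = u0 := by
    rw [hu0x, mulVec_sub, hSx, hSPx]
  have hSU0 : S * U0 = U0 := by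
    rw [hU0def, mul_vecMulVec, hSu0]
  have hSR : S * R = R := by
    rw [hRdef, mul_add, hSP, Matrix.mul_smul, hSU0]
  have hRS : R * S = S := by
    calc R * S = R * (T * Q) * ((NN T Q)⁻¹ * (Q * Tᴴ)) := by
          rw [hSdef, grAct_def]; simp only [Matrix.mul_assoc]
      _ = T * Q * ((NN T Q)⁻¹ * (Q * Tᴴ)) := by rw [hRTQ]
      _ = S := by rw [hSdef, grAct_def]; simp only [Matrix.mul_assoc]
  have hRH : Rᴴ = R := by
    rw [hRdef, conjTranspose_add, hPherm, conjTranspose_smul, hU0def, vecMulVec_conjT,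
      star_star]
    simp [hccdef, Complex.star_def, map_inv₀, Complex.conj_ofReal]
  have final : R = S := by
    calc R = Rᴴ := hRH.symm
      _ = (S * R)ᴴ := by rw [hSR]
      _ = Rᴴ * Sᴴ := conjTranspose_mul S R
      _ = R * S := by rw [hRH, hSH]
      _ = S := hRS
  rw [hU]
  exact final.symm


end
end

section
/- Let P ∈ ℂ^{L×L} with ‖P‖ ≤ 1 and let 0 < λ ≤ 2^{-6}. Then, in the ordering of Hermitian matrices, e^{λP*}·e^{λP} ≥ e^{-(3/4)λ²}·1_L + λ·(P* + P). -/
open Matrix BigOperators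
open scoped ComplexOrder

noncomputable section

/-- The `ℓ² → ℓ²` operator norm of a rectangular complex matrix. -/
def opNorm {m n : ℕ} (A : Matrix (Fin m) (Fin n) ℂ) : ℝ :=
  ‖LinearMap.toContinuousLinearMap (Matrix.toEuclideanLin A)‖

/-- The matrix exponential. -/
def mexp {n : ℕ} (A : Matrix (Fin n) (Fin n) ℂ) : Matrix (Fin n) (Fin n) ℂ :=
  ∑' k : ℕ, ((k.factorial : ℂ))⁻¹ • A ^ k

section Aux
open scoped Matrix.Norms.L2Operator
variable {n : ℕ}

/-- If `B` is Hermitian with `‖B‖ ≤ c` (ℓ²-operator norm), then `c•1 + B` is PSD. -/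
lemma psd_shift {B : Matrix (Fin n) (Fin n) ℂ} (hB : B.IsHermitian) {c : ℝ}
    (hc : ‖B‖ ≤ c) : (((c : ℂ)) • 1 + B).PosSemidef := by
  have hc0 : 0 ≤ c := le_trans (norm_nonneg _) hc
  refine Matrix.posSemidef_iff_dotProduct_mulVec.mpr ⟨?_, ?_⟩
  · unfold Matrix.IsHermitian
    rw [conjTranspose_add, conjTranspose_smul, conjTranspose_one, hB.eq,
      Complex.star_def, Complex.conj_ofReal]
  · intro x
    set y : EuclideanSpace ℂ (Fin n) := (WithLp.equiv 2 _).symm x with hy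
    set T : EuclideanSpace ℂ (Fin n) →L[ℂ] EuclideanSpace ℂ (Fin n) :=
      Matrix.toEuclideanCLM (𝕜 := ℂ) B with hT
    have hTnorm : ‖T‖ ≤ c := hc
    have hsymm : LinearMap.IsSymmetric (T : EuclideanSpace ℂ (Fin n) →ₗ[ℂ] EuclideanSpace ℂ (Fin n)) := by
      rw [hT, Matrix.coe_toEuclideanCLM_eq_toEuclideanLin]
      exact Matrix.isHermitian_iff_isSymmetric.mp hB
    have hz : star x ⬝ᵥ (B *ᵥ x) = @inner ℂ _ _ y (T y) := by rw [dotProduct_comm]; rfl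
    have hxx : star x ⬝ᵥ x = (‖y‖ : ℂ) ^ 2 := by
      rw [show star x ⬝ᵥ x = @inner ℂ _ _ y y by rw [dotProduct_comm]; rfl, inner_self_eq_norm_sq_to_K]
      norm_num
    have him : (@inner ℂ _ _ y (T y)).im = 0 := by
      rw [← Complex.conj_eq_iff_im, inner_conj_symm, hsymm.apply_clm]
    have hre : -(c * ‖y‖ ^ 2) ≤ (@inner ℂ _ _ y (T y)).re := by
      have h1 : ‖@inner ℂ _ _ y (T y)‖ ≤ c * ‖y‖ ^ 2 := by
        calc ‖@inner ℂ _ _ y (T y)‖ ≤ ‖y‖ * ‖T y‖ := norm_inner_le_norm y (T y)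
          _ ≤ ‖y‖ * (‖T‖ * ‖y‖) := by
              gcongr; exact T.le_opNorm y
          _ ≤ c * ‖y‖ ^ 2 := by nlinarith [norm_nonneg y, norm_nonneg T]
      nlinarith [Complex.abs_re_le_norm (@inner ℂ _ _ y (T y)), neg_abs_le (@inner ℂ _ _ y (T y)).re]
    have hcalc : star x ⬝ᵥ (((c : ℂ) • 1 + B) *ᵥ x)
        = (c : ℂ) * ((‖y‖ : ℂ)) ^ 2 + @inner ℂ _ _ y (T y) := by
      rw [add_mulVec, smul_mulVec, one_mulVec, dotProduct_add, dotProduct_smul,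
        hz, ← hxx]
      simp [smul_eq_mul]
    have hcast : (c : ℂ) * ((‖y‖ : ℂ)) ^ 2 = ((c * ‖y‖ ^ 2 : ℝ) : ℂ) := by push_cast; ring
    rw [hcalc, hcast, Complex.le_def]
    refine ⟨?_, ?_⟩
    · simp only [Complex.add_re, Complex.ofReal_re, Complex.zero_re]
      nlinarith [sq_nonneg ‖y‖]
    · rw [Complex.add_im, Complex.ofReal_im, him]; norm_num

lemma psd_smul {A : Matrix (Fin n) (Fin n) ℂ} (hA : A.PosSemidef) {r : ℝ} (hr : 0 ≤ r) :
    (((r : ℂ)) • A).PosSemidef := by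
  refine Matrix.posSemidef_iff_dotProduct_mulVec.mpr ⟨?_, ?_⟩
  · unfold Matrix.IsHermitian
    rw [conjTranspose_smul, hA.1.eq, Complex.star_def, Complex.conj_ofReal]
  · intro x
    rw [smul_mulVec, dotProduct_smul, smul_eq_mul]
    exact mul_nonneg (by exact_mod_cast hr) (hA.dotProduct_mulVec_nonneg x)

open NormedSpace in
lemma exp_remainder (A : Matrix (Fin n) (Fin n) ℂ) :
    ‖exp A - (1 + A + (2⁻¹ : ℂ) • (A * A))‖ ≤ ‖A‖ ^ 3 / 6 * Real.exp ‖A‖ := by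
  have hsum := expSeries_summable' (𝕂 := ℂ) A
  have htail := Summable.sum_add_tsum_nat_add 3 hsum
  have hhead : ∑ i ∈ Finset.range 3, ((i.factorial : ℂ))⁻¹ • A ^ i
      = 1 + A + (2⁻¹ : ℂ) • (A * A) := by
    simp [Finset.sum_range_succ, Nat.factorial, pow_succ]
  have hexp : exp A = ∑' k : ℕ, ((k.factorial : ℂ))⁻¹ • A ^ k := by
    rw [exp_eq_tsum ℂ]
  have heq : exp A - (1 + A + (2⁻¹ : ℂ) • (A * A))
      = ∑' k : ℕ, (((k + 3).factorial : ℂ))⁻¹ • A ^ (k + 3) := by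
    rw [hexp, ← htail, hhead, add_sub_cancel_left]
  rw [heq]
  have hbound : ∀ k : ℕ, ‖(((k + 3).factorial : ℂ))⁻¹ • A ^ (k + 3)‖
      ≤ ‖A‖ ^ 3 / 6 * (‖A‖ ^ k / k.factorial) := by
    intro k
    rw [norm_smul]
    have h1 : ‖A ^ (k + 3)‖ ≤ ‖A‖ ^ (k + 3) := norm_pow_le' A (by omega)
    have h2 : ‖(((k + 3).factorial : ℂ))⁻¹‖ = ((k + 3).factorial : ℝ)⁻¹ := by
      rw [norm_inv, Complex.norm_natCast]
    have h4 : k.factorial * 6 ≤ (k + 3).factorial :=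
      Nat.le_of_dvd (Nat.factorial_pos _)
        (by simpa [Nat.factorial, mul_comm] using Nat.factorial_mul_factorial_dvd_factorial_add k 3)
    have h3 : (6 : ℝ) * k.factorial ≤ (k + 3).factorial := by
      have := (Nat.cast_le (α := ℝ)).2 h4
      push_cast at this ⊢
      linarith
    rw [h2]
    have hA0 : (0:ℝ) ≤ ‖A‖ := norm_nonneg _
    have hf0 : (0:ℝ) < k.factorial := by exact_mod_cast Nat.factorial_pos k
    have hf3 : (0:ℝ) < (k + 3).factorial := by exact_mod_cast Nat.factorial_pos (k+3)
    calc ((k + 3).factorial : ℝ)⁻¹ * ‖A ^ (k + 3)‖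
        ≤ ((k + 3).factorial : ℝ)⁻¹ * ‖A‖ ^ (k + 3) := by
          apply mul_le_mul_of_nonneg_left h1 (by positivity)
      _ ≤ (6 * k.factorial : ℝ)⁻¹ * ‖A‖ ^ (k + 3) := by
          apply mul_le_mul_of_nonneg_right _ (by positivity)
          exact inv_anti₀ (by positivity) h3
      _ = ‖A‖ ^ 3 / 6 * (‖A‖ ^ k / k.factorial) := by
          rw [pow_add]; field_simp
  have hsum2 : Summable fun k : ℕ => ‖A‖ ^ 3 / 6 * (‖A‖ ^ k / k.factorial) :=
    (Real.summable_pow_div_factorial ‖A‖).mul_left _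
  have hsum1 : Summable fun k : ℕ => ‖(((k + 3).factorial : ℂ))⁻¹ • A ^ (k + 3)‖ :=
    Summable.of_nonneg_of_le (fun k => norm_nonneg _) hbound hsum2
  calc ‖∑' k : ℕ, (((k + 3).factorial : ℂ))⁻¹ • A ^ (k + 3)‖
      ≤ ∑' k : ℕ, ‖(((k + 3).factorial : ℂ))⁻¹ • A ^ (k + 3)‖ := norm_tsum_le_tsum_norm hsum1
    _ ≤ ∑' k : ℕ, ‖A‖ ^ 3 / 6 * (‖A‖ ^ k / k.factorial) := Summable.tsum_le_tsum hbound hsum1 hsum2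
    _ = ‖A‖ ^ 3 / 6 * Real.exp ‖A‖ := by
        rw [tsum_mul_left, Real.exp_eq_exp_ℝ, exp_eq_tsum_div]

lemma scalar_ineq (lam : ℝ) (h0 : 0 < lam) (h : lam ≤ 1 / 2 ^ 6) :
    5 * lam ^ 3 ≤ 1 - lam ^ 2 / 2 - Real.exp (-(3 / 4 * lam ^ 2)) := by
  have h1 := Real.add_one_le_exp (3 / 4 * lam ^ 2)
  have h2 : Real.exp (-(3 / 4 * lam ^ 2)) * Real.exp (3 / 4 * lam ^ 2) = 1 := by
    rw [← Real.exp_add]; ring_nf; exact Real.exp_zero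
  have h3 := Real.exp_pos (-(3 / 4 * lam ^ 2))
  have h4 := Real.exp_pos (3 / 4 * lam ^ 2)
  have hB : (1 : ℝ) ≤ (1 + 3 / 4 * lam ^ 2) * (1 - lam ^ 2 / 2 - 5 * lam ^ 3) := by
    nlinarith [sq_nonneg lam, mul_pos h0 h0, mul_pos (mul_pos h0 h0) h0,
      mul_pos (mul_pos (mul_pos h0 h0) h0) h0]
  have hkey : Real.exp (-(3 / 4 * lam ^ 2)) * (1 + 3 / 4 * lam ^ 2) ≤ 1 := by
    nlinarith
  nlinarith [mul_le_mul_of_nonneg_right hB h3.le, sq_nonneg lam]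

end Aux

section Main
open scoped Matrix.Norms.L2Operator
open NormedSpace

set_option maxHeartbeats 2000000 in
/-- key positivity estimate, inequality (38) in the paper: in the Loewner
order, `e^{λP*}e^{λP} ≥ e^{-(3/4)λ²}·1 + λ(P* + P)` whenever `‖P‖ ≤ 1` and `0 < λ ≤ 2^{-6}`. -/
theorem statement18 (L : ℕ) (P : Matrix (Fin L) (Fin L) ℂ) (hP : opNorm P ≤ 1)
    (lam : ℝ) (hlam0 : 0 < lam) (hlam : lam ≤ 1 / 2 ^ 6) :
    (mexp ((lam : ℂ) • Pᴴ) * mexp ((lam : ℂ) • P)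
      - (((Real.exp (-(3 / 4 * lam ^ 2)) : ℝ) : ℂ) • (1 : Matrix (Fin L) (Fin L) ℂ)
          + (lam : ℂ) • (Pᴴ + P))).PosSemidef := by
  have hP1 : ‖P‖ ≤ 1 := hP
  have hPc : ‖Pᴴ‖ ≤ 1 := by rw [Matrix.l2_opNorm_conjTranspose]; exact hP1
  have hlam1 : lam ≤ 1 := by nlinarith
  set A : Matrix (Fin L) (Fin L) ℂ := (lam : ℂ) • P with hAdef
  set M : Matrix (Fin L) (Fin L) ℂ := exp A with hMdef
  have hAn : ‖A‖ ≤ lam := by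
    rw [hAdef, norm_smul, Complex.norm_real, Real.norm_eq_abs, abs_of_pos hlam0]
    nlinarith [norm_nonneg P]
  have hm1 : mexp ((lam : ℂ) • P) = M := by
    rw [hMdef, exp_eq_tsum ℂ, ← hAdef, mexp]
  have hm2 : mexp ((lam : ℂ) • Pᴴ) = Mᴴ := by
    have hstar : star A = (lam : ℂ) • Pᴴ := by
      rw [hAdef, star_smul, Matrix.star_eq_conjTranspose, Complex.star_def, Complex.conj_ofReal]
    have h1 : mexp ((lam : ℂ) • Pᴴ) = exp ((lam : ℂ) • Pᴴ) := by
      rw [exp_eq_tsum ℂ, mexp]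
    rw [h1, ← hstar, ← star_exp, hMdef, Matrix.star_eq_conjTranspose]
  set Q : Matrix (Fin L) (Fin L) ℂ := 1 + A + (2⁻¹ : ℂ) • (A * A) with hQdef
  set R : Matrix (Fin L) (Fin L) ℂ := M - Q with hRdef
  have hone : ‖(1 : Matrix (Fin L) (Fin L) ℂ)‖ ≤ 1 := by
    rw [Matrix.cstar_norm_def, _root_.map_one]
    exact ContinuousLinearMap.norm_id_le
  have hRn : ‖R‖ ≤ lam ^ 3 / 2 := by
    have h1 : ‖R‖ ≤ ‖A‖ ^ 3 / 6 * Real.exp ‖A‖ := by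
      rw [hRdef, hQdef]; exact exp_remainder A
    have h2 : Real.exp ‖A‖ ≤ Real.exp 1 := Real.exp_le_exp.2 (le_trans hAn hlam1)
    have h3 : Real.exp 1 < 3 := by
      have := Real.exp_one_lt_d9; linarith
    have h4 : ‖A‖ ^ 3 ≤ lam ^ 3 := by
      apply pow_le_pow_left₀ (norm_nonneg _) hAn
    nlinarith [norm_nonneg A, Real.exp_pos ‖A‖, pow_nonneg (norm_nonneg A) 3]
  have hQn : ‖Q‖ ≤ 3 := by
    have h1 : ‖Q‖ ≤ ‖(1 : Matrix (Fin L) (Fin L) ℂ)‖ + ‖A‖ + ‖(2⁻¹ : ℂ)‖ * ‖A * A‖ := by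
      rw [hQdef]
      refine le_trans (norm_add_le _ _) ?_
      gcongr
      · exact norm_add_le _ _
      · rw [norm_smul]
    have h2 : ‖(2⁻¹ : ℂ)‖ = 2⁻¹ := by norm_num
    have h3 : ‖A * A‖ ≤ lam * lam :=
      le_trans (norm_mul_le _ _) (by nlinarith [norm_nonneg A])
    rw [h2] at h1
    nlinarith [norm_nonneg (A*A)]
  have hQcn : ‖Qᴴ‖ ≤ 3 := by rw [Matrix.l2_opNorm_conjTranspose]; exact hQn
  have hRcn : ‖Rᴴ‖ ≤ lam ^ 3 / 2 := by rw [Matrix.l2_opNorm_conjTranspose]; exact hRn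
  set E : Matrix (Fin L) (Fin L) ℂ :=
    Mᴴ * M - (1 + (lam : ℂ) • (Pᴴ + P) + ((lam ^ 2 : ℝ) : ℂ) • (Pᴴ * P)
      + ((lam ^ 2 / 2 : ℝ) : ℂ) • (Pᴴ * Pᴴ + P * P)) with hEdef
  have hEeq : E = (((lam ^ 3 / 2 : ℝ) : ℂ) • (Pᴴ * (P * P) + Pᴴ * (Pᴴ * P))
        + ((lam ^ 4 / 4 : ℝ) : ℂ) • (Pᴴ * (Pᴴ * (P * P))))
      + Qᴴ * R + Rᴴ * Q + Rᴴ * R := by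
    have hM : M = Q + R := by rw [hRdef]; abel
    rw [hEdef, hM, hQdef, hAdef]
    simp only [conjTranspose_add, conjTranspose_smul, conjTranspose_one, conjTranspose_mul,
      conjTranspose_conjTranspose, Complex.star_def, Complex.conj_ofReal, map_inv₀, map_ofNat]
    push_cast
    simp only [mul_add, add_mul, smul_mul_assoc, mul_smul_comm, mul_one, one_mul, smul_smul,
      mul_assoc]
    module
  -- products of norm-≤-1 matrices have norm ≤ 1
  have hPP : ‖P * P‖ ≤ 1 := le_trans (norm_mul_le _ _) (by nlinarith [norm_nonneg P])
  have hn1 : ‖Pᴴ * (P * P)‖ ≤ 1 :=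
    le_trans (norm_mul_le _ _) (by nlinarith [norm_nonneg Pᴴ, norm_nonneg (P * P)])
  have hcP : ‖Pᴴ * P‖ ≤ 1 :=
    le_trans (norm_mul_le _ _) (by nlinarith [norm_nonneg Pᴴ, norm_nonneg P])
  have hn2 : ‖Pᴴ * (Pᴴ * P)‖ ≤ 1 :=
    le_trans (norm_mul_le _ _) (by nlinarith [norm_nonneg Pᴴ, norm_nonneg (Pᴴ * P)])
  have hn3 : ‖Pᴴ * (Pᴴ * (P * P))‖ ≤ 1 :=
    le_trans (norm_mul_le _ _) (by nlinarith [norm_nonneg Pᴴ, norm_nonneg (Pᴴ * (P * P))])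
  have hEn : ‖E‖ ≤ 5 * lam ^ 3 := by
    rw [hEeq]
    have l1 : ‖((lam ^ 3 / 2 : ℝ) : ℂ) • (Pᴴ * (P * P) + Pᴴ * (Pᴴ * P))‖ ≤ lam ^ 3 := by
      rw [norm_smul, Complex.norm_real, Real.norm_eq_abs, abs_of_nonneg (by positivity)]
      have hN : ‖Pᴴ * (P * P) + Pᴴ * (Pᴴ * P)‖ ≤ 2 :=
        le_trans (norm_add_le _ _) (by linarith)
      calc lam ^ 3 / 2 * ‖Pᴴ * (P * P) + Pᴴ * (Pᴴ * P)‖ ≤ lam ^ 3 / 2 * 2 :=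
            mul_le_mul_of_nonneg_left hN (by positivity)
        _ = lam ^ 3 := by ring
    have l2 : ‖((lam ^ 4 / 4 : ℝ) : ℂ) • (Pᴴ * (Pᴴ * (P * P)))‖ ≤ lam ^ 4 / 4 := by
      rw [norm_smul, Complex.norm_real, Real.norm_eq_abs, abs_of_nonneg (by positivity)]
      calc lam ^ 4 / 4 * ‖Pᴴ * (Pᴴ * (P * P))‖ ≤ lam ^ 4 / 4 * 1 :=
            mul_le_mul_of_nonneg_left hn3 (by positivity)
        _ = lam ^ 4 / 4 := by ring
    have l3 : ‖Qᴴ * R‖ ≤ 3 * (lam ^ 3 / 2) :=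
      le_trans (norm_mul_le _ _) (mul_le_mul hQcn hRn (norm_nonneg _) (by norm_num))
    have l4 : ‖Rᴴ * Q‖ ≤ (lam ^ 3 / 2) * 3 :=
      le_trans (norm_mul_le _ _) (mul_le_mul hRcn hQn (norm_nonneg _) (by positivity))
    have l5 : ‖Rᴴ * R‖ ≤ (lam ^ 3 / 2) * (lam ^ 3 / 2) :=
      le_trans (norm_mul_le _ _) (mul_le_mul hRcn hRn (norm_nonneg _) (by positivity))
    have htot := norm_add_le
      (((lam ^ 3 / 2 : ℝ) : ℂ) • (Pᴴ * (P * P) + Pᴴ * (Pᴴ * P))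
        + ((lam ^ 4 / 4 : ℝ) : ℂ) • (Pᴴ * (Pᴴ * (P * P))) + Qᴴ * R + Rᴴ * Q) (Rᴴ * R)
    have htot2 := norm_add_le
      (((lam ^ 3 / 2 : ℝ) : ℂ) • (Pᴴ * (P * P) + Pᴴ * (Pᴴ * P))
        + ((lam ^ 4 / 4 : ℝ) : ℂ) • (Pᴴ * (Pᴴ * (P * P))) + Qᴴ * R) (Rᴴ * Q)
    have htot3 := norm_add_le
      (((lam ^ 3 / 2 : ℝ) : ℂ) • (Pᴴ * (P * P) + Pᴴ * (Pᴴ * P))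
        + ((lam ^ 4 / 4 : ℝ) : ℂ) • (Pᴴ * (Pᴴ * (P * P)))) (Qᴴ * R)
    have htot4 := norm_add_le
      (((lam ^ 3 / 2 : ℝ) : ℂ) • (Pᴴ * (P * P) + Pᴴ * (Pᴴ * P)))
      (((lam ^ 4 / 4 : ℝ) : ℂ) • (Pᴴ * (Pᴴ * (P * P))))
    nlinarith [pow_nonneg hlam0.le 3, pow_nonneg hlam0.le 4, pow_nonneg hlam0.le 5,
      pow_nonneg hlam0.le 6]
  have hEherm : E.IsHermitian := by
    unfold Matrix.IsHermitian
    rw [hEdef]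
    simp only [conjTranspose_sub, conjTranspose_add, conjTranspose_smul, conjTranspose_mul,
      conjTranspose_one, conjTranspose_conjTranspose, Complex.star_def, Complex.conj_ofReal]
    module
  set c₀ : ℝ := 1 - lam ^ 2 / 2 - Real.exp (-(3 / 4 * lam ^ 2)) with hc₀def
  have hEc : ‖E‖ ≤ c₀ := by
    have := scalar_ineq lam hlam0 hlam
    rw [hc₀def]; nlinarith [pow_nonneg hlam0.le 3]
  have S4 : (((c₀ : ℂ)) • 1 + E).PosSemidef := psd_shift hEherm hEc
  have hB3herm : (-(P * Pᴴ)).IsHermitian := by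
    unfold Matrix.IsHermitian
    simp [conjTranspose_neg, conjTranspose_mul, conjTranspose_conjTranspose]
  have hB3n : ‖-(P * Pᴴ)‖ ≤ (1 : ℝ) := by
    rw [norm_neg]
    exact le_trans (norm_mul_le _ _) (by nlinarith [norm_nonneg P, norm_nonneg Pᴴ])
  have S3 : ((((1 : ℝ) : ℂ)) • 1 + -(P * Pᴴ)).PosSemidef := psd_shift hB3herm hB3n
  have hhalf : (0 : ℝ) ≤ lam ^ 2 / 2 := by positivity
  have S1 : (((lam ^ 2 / 2 : ℝ) : ℂ) • ((Pᴴ + P)ᴴ * (Pᴴ + P))).PosSemidef :=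
    psd_smul (Matrix.posSemidef_conjTranspose_mul_self _) hhalf
  have S2 : (((lam ^ 2 / 2 : ℝ) : ℂ) • (Pᴴ * P)).PosSemidef :=
    psd_smul (Matrix.posSemidef_conjTranspose_mul_self _) hhalf
  have S3' : (((lam ^ 2 / 2 : ℝ) : ℂ) • ((((1 : ℝ) : ℂ)) • 1 + -(P * Pᴴ))).PosSemidef :=
    psd_smul S3 hhalf
  have hGoal : mexp ((lam : ℂ) • Pᴴ) * mexp ((lam : ℂ) • P)
      - (((Real.exp (-(3 / 4 * lam ^ 2)) : ℝ) : ℂ) • (1 : Matrix (Fin L) (Fin L) ℂ)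
          + (lam : ℂ) • (Pᴴ + P))
      = (((lam ^ 2 / 2 : ℝ) : ℂ) • ((Pᴴ + P)ᴴ * (Pᴴ + P))
          + ((lam ^ 2 / 2 : ℝ) : ℂ) • (Pᴴ * P)
          + ((lam ^ 2 / 2 : ℝ) : ℂ) • ((((1 : ℝ) : ℂ)) • 1 + -(P * Pᴴ)))
          + (((c₀ : ℂ)) • 1 + E) := by
    rw [hm1, hm2, hEdef, hc₀def]
    simp only [conjTranspose_add, conjTranspose_conjTranspose, Complex.star_def,
      Complex.conj_ofReal]
    push_cast
    simp only [mul_add, add_mul, smul_mul_assoc, mul_smul_comm, mul_one, one_mul, smul_smul,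
      smul_add, mul_assoc]
    module
  rw [hGoal]
  exact ((S1.add S2).add S3').add S4

end Main

end
end

section
/- Let L be odd, 1 ≤ L_c ≤ L−1, and for k ∈ {1,…,L} let c_k ∈ ℂ^L be the plane-wave vector with m-th entry L^{-1/2}·exp(2πi·mk/L). Then for every pair of unit vectors v, w ∈ ℂ^L such that the last L_c entries of v vanish and the first L−L_c entries of w vanish, one has Σ_{j=1}^{L} |⟨c_j, v⟩|²·|⟨c_j, w⟩|² > 0; i.e., there is an index j with ⟨c_j, v⟩ ≠ 0 and ⟨c_j, w⟩ ≠ 0. (Consequently the coupling constant β(L_c, L_c) of the random Toeplitz toy model is strictly positive.) -/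
set_option maxHeartbeats 1000000


open Matrix BigOperators

noncomputable section

/-- The standard Hermitian inner product `⟨u, v⟩` on `ℂ^n`. -/
def dotc {n : ℕ} (u v : Fin n → ℂ) : ℂ := ∑ i, star (u i) * v i

/-- The plane wave `c_k ∈ ℂ^L` (1-based index `k = (k:ℕ)+1`, with `m`-th entry
`L^{-1/2} e^{2πi m k / L}` for `m ∈ {1,…,L}`). -/
def planeWave (L : ℕ) (k : Fin L) : Fin L → ℂ := fun m =>
  ((Real.sqrt L : ℝ) : ℂ)⁻¹ *
    Complex.exp (2 * (Real.pi : ℂ) * Complex.I * (((m : ℕ) : ℂ) + 1) * (((k : ℕ) : ℂ) + 1)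
      / (L : ℂ))

lemma card_eval_zero_le {L : ℕ} (p : Polynomial ℂ) (hp : p ≠ 0) (x : Fin L → ℂ)
    (hinj : Function.Injective x) :
    (Finset.univ.filter (fun j : Fin L => p.eval (x j) = 0)).card ≤ p.natDegree := by
  have h1 : (Finset.univ.filter (fun j : Fin L => p.eval (x j) = 0)).card
      ≤ p.roots.toFinset.card := by
    apply Finset.card_le_card_of_injOn x
    · intro j hj
      simp only [Finset.mem_coe, Finset.mem_filter] at hj ⊢
      rw [Multiset.mem_toFinset, Polynomial.mem_roots']
      exact ⟨hp, hj.2⟩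
    · exact hinj.injOn
  calc _ ≤ p.roots.toFinset.card := h1
    _ ≤ Multiset.card p.roots := Multiset.toFinset_card_le _
    _ ≤ p.natDegree := Polynomial.card_roots' p

/-- positivity of the coupling constant of the random Toeplitz toy model:
for odd `L` and unit vectors `v`, `w` with the last `L_c` entries of `v` and the first
`L − L_c` entries of `w` vanishing, `Σ_j |⟨c_j,v⟩|²|⟨c_j,w⟩|² > 0`. -/
theorem statement19 (L Lc : ℕ) (hodd : Odd L) (hLc1 : 1 ≤ Lc) (hLc2 : Lc ≤ L - 1)
    (v w : Fin L → ℂ) (hv : sqNorm v = 1) (hw : sqNorm w = 1)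
    (hvc : ∀ i : Fin L, L - Lc ≤ (i : ℕ) → v i = 0)
    (hwc : ∀ i : Fin L, (i : ℕ) < L - Lc → w i = 0) :
    0 < ∑ j : Fin L, ‖dotc (planeWave L j) v‖ ^ 2 * ‖dotc (planeWave L j) w‖ ^ 2 := by
  classical
  have hL2 : 2 ≤ L := by omega
  have hL0 : (0:ℝ) < L := by positivity
  set d := L - Lc with hd
  have hd1 : 1 ≤ d := by omega
  -- the sample points
  set x : Fin L → ℂ := fun j =>
    Complex.exp (-(2 * (Real.pi : ℂ) * Complex.I * (((j : ℕ) : ℂ) + 1)) / (L : ℂ)) with hx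
  have hxne : ∀ j, x j ≠ 0 := fun j => Complex.exp_ne_zero _
  -- primitive root
  set ζ : ℂ := (Complex.exp (2 * (Real.pi : ℂ) * Complex.I / L))⁻¹ with hζ
  have hζexp : ζ = Complex.exp (-(2 * (Real.pi : ℂ) * Complex.I / L)) := by
    rw [hζ, ← Complex.exp_neg]
  have hprim : IsPrimitiveRoot ζ L :=
    (Complex.isPrimitiveRoot_exp L (by omega)).inv
  have hζne : ζ ≠ 0 := by
    rw [hζexp]; exact Complex.exp_ne_zero _
  have hxζ : ∀ j : Fin L, x j = ζ ^ ((j : ℕ) + 1) := by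
    intro j
    simp only [hx, hζexp, ← Complex.exp_nat_mul]
    congr 1
    push_cast
    ring
  have hxinj : Function.Injective x := by
    intro j k h
    rw [hxζ, hxζ, pow_succ, pow_succ] at h
    have h2 : ζ ^ (j : ℕ) = ζ ^ (k : ℕ) := mul_right_cancel₀ hζne h
    exact Fin.ext (hprim.pow_inj j.isLt k.isLt h2)
  have hsne : ((Real.sqrt L : ℝ) : ℂ)⁻¹ ≠ 0 := by
    apply inv_ne_zero
    simp only [ne_eq, Complex.ofReal_eq_zero]
    exact ne_of_gt (Real.sqrt_pos.mpr hL0)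
  -- key formula for the inner product
  have key : ∀ (j : Fin L) (u : Fin L → ℂ), dotc (planeWave L j) u =
      ((Real.sqrt L : ℝ) : ℂ)⁻¹ * ∑ m : Fin L, u m * (x j) ^ ((m : ℕ) + 1) := by
    intro j u
    unfold dotc planeWave
    rw [Finset.mul_sum]
    apply Finset.sum_congr rfl
    intro m _
    have hstar : star (((Real.sqrt L : ℝ) : ℂ)⁻¹ *
        Complex.exp (2 * (Real.pi : ℂ) * Complex.I * (((m : ℕ) : ℂ) + 1) * (((j : ℕ) : ℂ) + 1)
          / (L : ℂ))) =
        ((Real.sqrt L : ℝ) : ℂ)⁻¹ *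
        Complex.exp (-(2 * (Real.pi : ℂ) * Complex.I * (((m : ℕ) : ℂ) + 1) * (((j : ℕ) : ℂ) + 1))
          / (L : ℂ)) := by
      have h1 : (starRingEnd ℂ) (2 * (Real.pi : ℂ) * Complex.I * (((m : ℕ) : ℂ) + 1)
          * (((j : ℕ) : ℂ) + 1) / (L : ℂ)) =
          -(2 * (Real.pi : ℂ) * Complex.I * (((m : ℕ) : ℂ) + 1) * (((j : ℕ) : ℂ) + 1))
          / (L : ℂ) := by
        simp only [map_div₀, _root_.map_mul, _root_.map_add, _root_.map_one, Complex.conj_I,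
          Complex.conj_ofReal, Complex.conj_natCast, _root_.map_ofNat]
        ring
      rw [star_mul']
      simp only [RCLike.star_def]
      rw [← Complex.exp_conj, h1]
      simp [Complex.conj_ofReal]
    rw [hstar]
    have hpow : Complex.exp (-(2 * (Real.pi : ℂ) * Complex.I * (((m : ℕ) : ℂ) + 1)
        * (((j : ℕ) : ℂ) + 1)) / (L : ℂ)) = (x j) ^ ((m : ℕ) + 1) := by
      rw [hx]
      rw [← Complex.exp_nat_mul]
      congr 1
      push_cast
      ring
    rw [hpow]
    ring
  -- the polynomials
  set P : Polynomial ℂ := ∑ m : Fin L, Polynomial.C (v m) * Polynomial.X ^ (m : ℕ) with hP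
  set Q : Polynomial ℂ := ∑ m : Fin L, Polynomial.C (w m) * Polynomial.X ^ ((m : ℕ) - d) with hQ
  have hPev : ∀ t : ℂ, P.eval t = ∑ m : Fin L, v m * t ^ (m : ℕ) := by
    intro t; rw [hP, Polynomial.eval_finset_sum]; simp
  have hQev : ∀ t : ℂ, Q.eval t = ∑ m : Fin L, w m * t ^ ((m : ℕ) - d) := by
    intro t; rw [hQ, Polynomial.eval_finset_sum]; simp
  -- inner products via polynomials
  have dotv : ∀ j : Fin L, dotc (planeWave L j) v =
      ((Real.sqrt L : ℝ) : ℂ)⁻¹ * (x j * P.eval (x j)) := by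
    intro j
    rw [key, hPev]
    congr 1
    rw [Finset.mul_sum]
    apply Finset.sum_congr rfl
    intro m _
    rw [pow_succ]
    ring
  have dotw : ∀ j : Fin L, dotc (planeWave L j) w =
      ((Real.sqrt L : ℝ) : ℂ)⁻¹ * ((x j) ^ (d + 1) * Q.eval (x j)) := by
    intro j
    rw [key, hQev]
    congr 1
    rw [Finset.mul_sum]
    apply Finset.sum_congr rfl
    intro m _
    by_cases hm : (m : ℕ) < d
    · rw [hwc m hm]; ring
    · have hmd : d ≤ (m : ℕ) := le_of_not_gt hm
      have : (m : ℕ) + 1 = (d + 1) + ((m : ℕ) - d) := by omega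
      rw [this, pow_add]
      ring
  -- nonvanishing of the polynomials
  have hvex : ∃ m, v m ≠ 0 := by
    by_contra h
    push_neg at h
    simp [sqNorm, h] at hv
  have hwex : ∃ m, w m ≠ 0 := by
    by_contra h
    push_neg at h
    simp [sqNorm, h] at hw
  obtain ⟨mv, hmv⟩ := hvex
  obtain ⟨mw, hmw⟩ := hwex
  have hPne : P ≠ 0 := by
    intro h0
    apply hmv
    have : P.coeff (mv : ℕ) = v mv := by
      rw [hP, Polynomial.finset_sum_coeff]
      rw [Finset.sum_eq_single mv]
      · simp [Polynomial.coeff_C_mul, Polynomial.coeff_X_pow]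
      · intro i _ hne
        have : (mv : ℕ) ≠ (i : ℕ) := fun h => hne (Fin.ext h.symm)
        simp [Polynomial.coeff_C_mul, Polynomial.coeff_X_pow, this]
      · simp
    rw [h0] at this
    simpa using this.symm
  have hmwd : d ≤ (mw : ℕ) := by
    by_contra h
    exact hmw (hwc mw (lt_of_not_ge h))
  have hQne : Q ≠ 0 := by
    intro h0
    apply hmw
    have : Q.coeff ((mw : ℕ) - d) = w mw := by
      rw [hQ, Polynomial.finset_sum_coeff]
      rw [Finset.sum_eq_single mw]
      · simp [Polynomial.coeff_C_mul, Polynomial.coeff_X_pow]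
      · intro i _ hne
        by_cases hwi : w i = 0
        · simp [hwi]
        · have hid : d ≤ (i : ℕ) := by
            by_contra h
            exact hwi (hwc i (lt_of_not_ge h))
          have hiv : (i : ℕ) ≠ (mw : ℕ) := fun h => hne (Fin.ext h)
          have : (mw : ℕ) - d ≠ (i : ℕ) - d := by omega
          simp [Polynomial.coeff_C_mul, Polynomial.coeff_X_pow, this]
      · simp
    rw [h0] at this
    simpa using this.symm
  -- degree bounds
  have degP : P.natDegree ≤ d - 1 := by
    rw [hP]
    apply Polynomial.natDegree_sum_le_of_forall_le
    intro m _
    by_cases hvm : v m = 0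
    · simp [hvm]
    · have hm : (m : ℕ) < d := by
        by_contra h
        exact hvm (hvc m (le_of_not_gt h))
      calc (Polynomial.C (v m) * Polynomial.X ^ (m : ℕ)).natDegree
          ≤ (Polynomial.X ^ (m : ℕ) : Polynomial ℂ).natDegree :=
            Polynomial.natDegree_C_mul_le _ _
        _ = (m : ℕ) := Polynomial.natDegree_X_pow _
        _ ≤ d - 1 := by omega
  have degQ : Q.natDegree ≤ Lc - 1 := by
    rw [hQ]
    apply Polynomial.natDegree_sum_le_of_forall_le
    intro m _
    by_cases hwm : w m = 0
    · simp [hwm]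
    · have hm : d ≤ (m : ℕ) := by
        by_contra h
        exact hwm (hwc m (lt_of_not_ge h))
      have hmL : (m : ℕ) < L := m.isLt
      calc (Polynomial.C (w m) * Polynomial.X ^ ((m : ℕ) - d)).natDegree
          ≤ (Polynomial.X ^ ((m : ℕ) - d) : Polynomial ℂ).natDegree :=
            Polynomial.natDegree_C_mul_le _ _
        _ = (m : ℕ) - d := Polynomial.natDegree_X_pow _
        _ ≤ Lc - 1 := by omega
  -- counting
  set S := Finset.univ.filter (fun j : Fin L => P.eval (x j) = 0) with hS
  set T := Finset.univ.filter (fun j : Fin L => Q.eval (x j) = 0) with hT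
  have hSc : S.card ≤ d - 1 := le_trans (card_eval_zero_le P hPne x hxinj) degP
  have hTc : T.card ≤ Lc - 1 := le_trans (card_eval_zero_le Q hQne x hxinj) degQ
  have hcard : (S ∪ T).card < L := by
    calc (S ∪ T).card ≤ S.card + T.card := Finset.card_union_le _ _
      _ ≤ (d - 1) + (Lc - 1) := Nat.add_le_add hSc hTc
      _ < L := by omega
  have hnotsub : ¬ (Finset.univ : Finset (Fin L)) ⊆ S ∪ T := by
    intro h
    have := Finset.card_le_card h
    rw [Finset.card_univ, Fintype.card_fin] at this
    omega
  obtain ⟨j, -, hj⟩ := Finset.not_subset.mp hnotsub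
  rw [Finset.mem_union, not_or] at hj
  have hjP : P.eval (x j) ≠ 0 := by
    intro h; exact hj.1 (by rw [hS]; simp [h])
  have hjQ : Q.eval (x j) ≠ 0 := by
    intro h; exact hj.2 (by rw [hT]; simp [h])
  have hdv : dotc (planeWave L j) v ≠ 0 := by
    rw [dotv]
    exact mul_ne_zero hsne (mul_ne_zero (hxne j) hjP)
  have hdw : dotc (planeWave L j) w ≠ 0 := by
    rw [dotw]
    exact mul_ne_zero hsne (mul_ne_zero (pow_ne_zero _ (hxne j)) hjQ)
  apply Finset.sum_pos'
  · intro i _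
    positivity
  · refine ⟨j, Finset.mem_univ j, ?_⟩
    apply mul_pos
    · exact pow_pos (norm_pos_iff.mpr hdv) 2
    · exact pow_pos (norm_pos_iff.mpr hdw) 2

end
end
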